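/- Let a : ℕ → ℝ be a sequence with a_k ≥ 0 for all k and Σ_{k=0}^∞ a_k < ∞, define f : [-1,1] → ℝ by f(t) = Σ_{k=0}^∞ a_k t^k, and let λ ∈ ℝ. Then the kernel ((u,x),(v,y)) ∈ (ℝ × S^∞)² ↦ f(⟨x,y⟩ · cos(λ(u−v))) is positive definite on ℝ × S^∞ (with complex scalars). -/

import Mathlib

/-!
By Schur's product theorem the kernel `⟪x, y⟫ cos (λ (u - v))` is positive semidefinite on every
finite point set: it is the entrywise product of a Gram kernel and of
`cos (α - β) = cos α cos β + sin α sin β`, a sum of two rank-one kernels. So are its entrywise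
powers. On the sphere the kernel takes values in `[-1, 1]`, where `f = ∑ aₖ tᵏ` converges, so
`f` of it is a convergent series of positive semidefinite matrices with coefficients `aₖ ≥ 0`,
hence positive semidefinite because that cone is closed. A real positive semidefinite matrix
is positive semidefinite over `ℂ` as well, which gives positivity for complex scalars.
-/

open scoped BigOperators RealInnerProductSpace ComplexConjugate

noncomputable section

/-- A complex kernel `K` on `X` is positive definite: every quadratic form
`∑ᵢⱼ cᵢ conj(cⱼ) K(xᵢ, xⱼ)` is a nonnegative real number. -/
def IsPosDefKernelC {X : Type*} (K : X → X → ℂ) : Prop :=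
  ∀ (n : ℕ) (x : Fin n → X) (c : Fin n → ℂ),
    0 ≤ (∑ i, ∑ j, c i * conj (c j) * K (x i) (x j)).re ∧
      (∑ i, ∑ j, c i * conj (c j) * K (x i) (x j)).im = 0

/-- The real Hilbert space `ℓ²` of square-summable real sequences. -/
abbrev EllTwo : Type := lp (fun _ : ℕ => ℝ) 2

open scoped ComplexOrder MatrixOrder

namespace Matrix

variable {n 𝕜 : Type*} [RCLike 𝕜]

theorem PosSemidef.map_ofReal [Fintype n] {A : Matrix n n ℝ} (hA : A.PosSemidef) :
    (A.map ((↑) : ℝ → 𝕜)).PosSemidef := by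
  classical
  obtain ⟨B, rfl⟩ := CStarAlgebra.nonneg_iff_eq_star_mul_self.mp hA.nonneg
  have hB : (star B * B).map ((↑) : ℝ → 𝕜) = (B.map (↑))ᴴ * B.map (↑) := by
    rw [← RCLike.ofRealAm_coe, Matrix.map_mul, star_eq_conjTranspose,
      conjTranspose_map _ fun x => by simp]
  rw [hB]
  exact posSemidef_conjTranspose_mul_self _

theorem PosSemidef.map_pow [Fintype n] {A : Matrix n n 𝕜} (hA : A.PosSemidef) (k : ℕ) :
    (A.map (· ^ k)).PosSemidef := by
  induction k with
  | zero =>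
    convert posSemidef_vecMulVec_self_star (1 : n → 𝕜) using 1
    ext i j
    simp [vecMulVec_apply]
  | succ k ih =>
    convert ih.hadamard hA using 1
    ext i j
    simp [pow_succ]

theorem isClosed_setOf_posSemidef [Fintype n] : IsClosed {A : Matrix n n 𝕜 | A.PosSemidef} := by
  simp_rw [posSemidef_iff_dotProduct_mulVec, Set.ofPred_and, Set.ofPred_forall]
  exact (isClosed_eq continuous_id.matrix_conjTranspose continuous_id).inter
    (isClosed_iInter fun x => isClosed_le continuous_const (by fun_prop))

theorem _root_.HasSum.posSemidef [Fintype n] {ι : Type*} {A : ι → Matrix n n 𝕜}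
    {S : Matrix n n 𝕜} (hS : HasSum A S) (hA : ∀ k, (A k).PosSemidef) : S.PosSemidef :=
  isClosed_setOf_posSemidef.mem_of_tendsto hS
    (Filter.Eventually.of_forall fun s => posSemidef_sum s fun k _ => hA k)

theorem posSemidef_cos_sub [Fintype n] (u : n → ℝ) :
    (of fun i j => Real.cos (u i - u j)).PosSemidef := by
  have h : of (fun i j => Real.cos (u i - u j)) = vecMulVec (Real.cos ∘ u) (star (Real.cos ∘ u)) +
      vecMulVec (Real.sin ∘ u) (star (Real.sin ∘ u)) := by
    ext i j
    simp [vecMulVec_apply, Real.cos_sub]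
  rw [h]
  exact (posSemidef_vecMulVec_self_star _).add (posSemidef_vecMulVec_self_star _)

end Matrix

open Matrix

theorem isPosDefKernelC_of_posSemidef {X : Type*} {K : X → X → ℂ}
    (hK : ∀ n (x : Fin n → X), (of fun i j => K (x i) (x j)).PosSemidef) :
    IsPosDefKernelC K := by
  intro n x c
  have h := (hK n x).dotProduct_mulVec_nonneg (star c)
  have hform : star (star c) ⬝ᵥ (of (fun i j => K (x i) (x j)) *ᵥ star c) =
      ∑ i, ∑ j, c i * conj (c j) * K (x i) (x j) := by
    simp only [star_star, dotProduct, mulVec, Finset.mul_sum]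
    exact Fintype.sum_congr _ _ fun i => Fintype.sum_congr _ _ fun j => by
      simp only [of_apply, Pi.star_apply, RCLike.star_def]; ring
  rw [hform, Complex.nonneg_iff] at h
  exact ⟨h.1, h.2.symm⟩

theorem summable_mul_pow_of_abs_le_one {a : ℕ → ℝ} (ha : Summable a) {t : ℝ} (ht : |t| ≤ 1) :
    Summable fun k => a k * t ^ k :=
  ha.abs.of_norm_bounded fun k => by
    rw [Real.norm_eq_abs, abs_mul, abs_pow]
    exact mul_le_of_le_one_right (abs_nonneg _) (pow_le_one₀ (abs_nonneg t) ht)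

theorem pd_on_time_cross_sphere
    (a : ℕ → ℝ) (ha : ∀ k, 0 ≤ a k) (hsa : Summable a)
    (f : ℝ → ℝ)
    (hf : ∀ t ∈ Set.Icc (-1 : ℝ) 1, f t = ∑' k : ℕ, a k * t ^ k)
    (lam : ℝ) :
    IsPosDefKernelC
      (fun p q : ℝ × Metric.sphere (0 : EllTwo) 1 =>
        ((f (⟪(p.2 : EllTwo), (q.2 : EllTwo)⟫ * Real.cos (lam * (p.1 - q.1))) : ℝ) : ℂ)) := by
  refine isPosDefKernelC_of_posSemidef fun n x => ?_
  set T : Matrix (Fin n) (Fin n) ℝ := gram ℝ (fun i => ((x i).2 : EllTwo)) ⊙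
    of fun i j => Real.cos (lam * ((x i).1 - (x j).1))
  have hT : T.PosSemidef := (posSemidef_gram ℝ _).hadamard <| by
    simpa only [mul_sub] using posSemidef_cos_sub fun i => lam * (x i).1
  have hT_le : ∀ i j, |T i j| ≤ 1 := fun i j => by
    simp only [T, hadamard_apply, gram_apply, of_apply, abs_mul]
    refine mul_le_one₀ (abs_le.2 ?_) (abs_nonneg _) (Real.abs_cos_le_one _)
    exact real_inner_mem_Icc_of_norm_eq_one (norm_eq_of_mem_sphere _) (norm_eq_of_mem_sphere _)
  have hF : HasSum (fun k => a k • T.map (· ^ k)) (of fun i j => f (T i j)) := by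
    refine Pi.hasSum.2 fun i => Pi.hasSum.2 fun j => ?_
    rw [of_apply, hf _ (abs_le.1 (hT_le i j))]
    exact (summable_mul_pow_of_abs_le_one hsa (hT_le i j)).hasSum
  exact (hF.posSemidef fun k => (hT.map_pow k).smul (ha k)).map_ofReal
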